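/- Let α ∈ (0, π) and x₀ ∈ (0, π) be given, and define a_{α,x₀} : (0,π) → ℝ by a_{α,x₀}(x) = α²/x₀² for x ∈ (0,x₀) and a_{α,x₀}(x) = α²/(π−x₀)² for x ∈ (x₀,π). Then the periodic boundary value problem u''(x) + a_{α,x₀}(x)u(x) = 0 on (0,π), u(0) − u(π) = 0, u'(0) − u'(π) = 0, has only the trivial solution u ≡ 0. -/

import Mathlib

open MeasureTheory Set Real

/-- `u` is a solution of `u'' + a·u = 0` on `[c,d]`, with derivative function `v`. -/
def IsSolOn (a u v : ℝ → ℝ) (c d : ℝ) : Prop :=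
  (∀ x ∈ Set.Icc c d, HasDerivWithinAt u (v x) (Set.Icc c d) x) ∧
  (∀ x ∈ Set.Icc c d, v x = v c - ∫ t in c..x, a t * u t)

/-- The piecewise constant coefficient `a_{α,x₀}`. -/
noncomputable def aPiece (α x₀ : ℝ) : ℝ → ℝ := fun x =>
  if x < x₀ then α ^ 2 / x₀ ^ 2 else α ^ 2 / (Real.pi - x₀) ^ 2

/-!
On `(0, x₀)` and `(x₀, π)` the coefficient is constant, `ω₁² = (α / x₀)²` resp.
`ω₂² = (α / (π - x₀))²`, so on each piece `u` is a combination of `cos` and `sin` of `ω (x - c)`,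
and each piece advances this phase by exactly `α`. Once around the interval, `(u, u')` is mapped
by a product of two transfer matrices of determinant `1` whose trace is
`2 cos² α - (ω₁ / ω₂ + ω₂ / ω₁) sin² α < 2` (as `sin α > 0`), so it has no nonzero fixed vector
and periodicity forces `u 0 = u' 0 = 0`.
-/

noncomputable def harmonicSol (ω c p q : ℝ) (x : ℝ) : ℝ :=
  p * cos (ω * (x - c)) + q / ω * sin (ω * (x - c))

lemma harmonicSol_of_mul_eq {ω c p q x θ : ℝ} (h : ω * (x - c) = θ) :
    harmonicSol ω c p q x = p * cos θ + q / ω * sin θ := by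
  rw [harmonicSol, h]

@[simp]
lemma harmonicSol_zero (ω c x : ℝ) : harmonicSol ω c 0 0 x = 0 := by
  simp [harmonicSol]

lemma harmonicSol_mul (ω c k p q x : ℝ) :
    harmonicSol ω c (k * p) (k * q) x = k * harmonicSol ω c p q x := by
  unfold harmonicSol; ring

lemma hasDerivAt_harmonicSol {ω : ℝ} (hω : ω ≠ 0) (c p q x : ℝ) :
    HasDerivAt (harmonicSol ω c p q) (harmonicSol ω c q (-(ω ^ 2) * p) x) x := by
  have hlin : HasDerivAt (fun x => ω * (x - c)) ω x := by
    simpa using ((hasDerivAt_id x).sub_const c).const_mul ω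
  refine (((hlin.cos).const_mul p).add ((hlin.sin).const_mul (q / ω))).congr_deriv ?_
  simp only [harmonicSol]
  field_simp
  ring

lemma eq_zero_of_harmonic_of_initial_eq_zero {ω c d : ℝ} {p q : ℝ → ℝ} (hω : ω ≠ 0)
    (hp : ∀ x ∈ Icc c d, HasDerivWithinAt p (q x) (Icc c d) x)
    (hq : ∀ x ∈ Icc c d, HasDerivWithinAt q (-(ω ^ 2) * p x) (Icc c d) x)
    (hpc : p c = 0) (hqc : q c = 0) :
    ∀ x ∈ Icc c d, p x = 0 ∧ q x = 0 := by
  have henergy : ∀ x ∈ Icc c d,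
      HasDerivWithinAt (fun x => q x ^ 2 + ω ^ 2 * p x ^ 2) 0 (Icc c d) x := fun x hx => by
    refine (((hq x hx).pow 2).add (((hp x hx).pow 2).const_mul (ω ^ 2))).congr_deriv ?_
    ring
  intro x hx
  have hzero : q x ^ 2 + ω ^ 2 * p x ^ 2 = 0 := by
    simpa [hpc, hqc] using
      norm_image_sub_le_of_norm_deriv_le_segment' henergy (C := 0) (by simp) x hx
  have hω2 : 0 < ω ^ 2 := by positivity
  have hp2 : ω ^ 2 * p x ^ 2 = 0 := by nlinarith [sq_nonneg (q x), sq_nonneg (p x)]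
  constructor
  · simpa [hω] using hp2
  · nlinarith [sq_nonneg (q x), sq_nonneg (p x)]

lemma eq_harmonicSol_of_hasDerivWithinAt {ω c d : ℝ} {u v : ℝ → ℝ} (hω : ω ≠ 0)
    (hu : ∀ x ∈ Icc c d, HasDerivWithinAt u (v x) (Icc c d) x)
    (hv : ∀ x ∈ Icc c d, HasDerivWithinAt v (-(ω ^ 2) * u x) (Icc c d) x) :
    ∀ x ∈ Icc c d, u x = harmonicSol ω c (u c) (v c) x ∧
      v x = harmonicSol ω c (v c) (-(ω ^ 2) * u c) x := by
  have hU := hasDerivAt_harmonicSol hω c (u c) (v c)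
  have hV := hasDerivAt_harmonicSol hω c (v c) (-(ω ^ 2) * u c)
  simp only [harmonicSol_mul] at hV
  have hdiff := eq_zero_of_harmonic_of_initial_eq_zero
    (p := fun x => u x - harmonicSol ω c (u c) (v c) x)
    (q := fun x => v x - harmonicSol ω c (v c) (-(ω ^ 2) * u c) x) hω
    (fun x hx => (hu x hx).sub (hU x).hasDerivWithinAt)
    (fun x hx => ((hv x hx).sub (hV x).hasDerivWithinAt).congr_deriv (by ring))
    (by simp [harmonicSol]) (by simp [harmonicSol])
  intro x hx
  obtain ⟨h₁, h₂⟩ := hdiff x hx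
  exact ⟨sub_eq_zero.mp h₁, sub_eq_zero.mp h₂⟩

lemma hasDerivWithinAt_of_eq_sub_integral {c d : ℝ} {g v : ℝ → ℝ}
    (hg : ContinuousOn g (Icc c d)) (hv : ∀ x ∈ Icc c d, v x = v c - ∫ t in c..x, g t)
    (x : ℝ) (hx : x ∈ Icc c d) : HasDerivWithinAt v (-g x) (Icc c d) x := by
  have : Fact (x ∈ Icc c d) := ⟨hx⟩
  have hint : IntervalIntegrable g volume c x :=
    (hg.mono (by rw [uIcc_of_le hx.1]; exact Icc_subset_Icc_right hx.2)).intervalIntegrable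
  have hF := intervalIntegral.integral_hasDerivWithinAt_right (s := Icc c d) (t := Icc c d) hint
    (hg.stronglyMeasurableAtFilter_nhdsWithin measurableSet_Icc x) (hg x hx)
  exact (hF.const_sub (v c)).congr hv (hv x hx)

namespace IsSolOn

variable {a u v : ℝ → ℝ} {c d : ℝ}

lemma continuousOn (h : IsSolOn a u v c d) : ContinuousOn u (Icc c d) :=
  fun x hx => (h.1 x hx).continuousWithinAt

lemma mono {c' d' : ℝ} (h : IsSolOn a u v c d)
    (hint : IntervalIntegrable (fun t => a t * u t) volume c d) (hc : c ≤ c') (hd : d' ≤ d) :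
    IsSolOn a u v c' d' := by
  have hsub : Icc c' d' ⊆ Icc c d := Icc_subset_Icc hc hd
  refine ⟨fun x hx => (h.1 x (hsub hx)).mono hsub, fun x hx => ?_⟩
  have hc' : c' ∈ Icc c d := ⟨hc, hx.1.trans (hx.2.trans hd)⟩
  have hint' : ∀ y ∈ Icc c d, IntervalIntegrable (fun t => a t * u t) volume c y := fun y hy =>
    hint.mono_set (uIcc_subset_uIcc left_mem_uIcc (Icc_subset_uIcc hy))
  rw [h.2 x (hsub hx), h.2 c' hc', ← intervalIntegral.integral_add_adjacent_intervals
    (hint' c' hc') ((hint' c' hc').symm.trans (hint' x (hsub hx)))]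
  ring

lemma eq_harmonicSol {ω : ℝ} (h : IsSolOn a u v c d) (hω : ω ≠ 0)
    (ha : ∀ t ∈ Ioo c d, a t = ω ^ 2) :
    ∀ x ∈ Icc c d, u x = harmonicSol ω c (u c) (v c) x ∧
      v x = harmonicSol ω c (v c) (-(ω ^ 2) * u c) x := by
  have hv : ∀ x ∈ Icc c d, v x = v c - ∫ t in c..x, ω ^ 2 * u t := fun x hx => by
    rw [h.2 x hx, intervalIntegral.integral_congr_Ioo_of_le hx.1 fun t ht => by
      rw [ha t ⟨ht.1, ht.2.trans_le hx.2⟩]]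
  refine eq_harmonicSol_of_hasDerivWithinAt hω h.1 fun x hx => ?_
  simpa only [neg_mul] using
    hasDerivWithinAt_of_eq_sub_integral (g := fun t => ω ^ 2 * u t)
      (continuousOn_const.mul h.continuousOn) hv x hx

end IsSolOn

lemma intervalIntegrable_aPiece (α x₀ a b : ℝ) : IntervalIntegrable (aPiece α x₀) volume a b := by
  constructor <;>
  exact Integrable.piecewise (s := Iio x₀) measurableSet_Iio (integrable_const _).integrableOn
    (integrable_const _).integrableOn

lemma eq_zero_of_transfer_cycle {ω₁ ω₂ θ u₀ v₀ u₁ v₁ : ℝ} (hω₁ : 0 < ω₁) (hω₂ : 0 < ω₂)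
    (hθ : 0 < sin θ)
    (hu₁ : u₁ = u₀ * cos θ + v₀ / ω₁ * sin θ) (hv₁ : v₁ = v₀ * cos θ + -(ω₁ ^ 2) * u₀ / ω₁ * sin θ)
    (hu₀ : u₀ = u₁ * cos θ + v₁ / ω₂ * sin θ) (hv₀ : v₀ = v₁ * cos θ + -(ω₂ ^ 2) * u₁ / ω₂ * sin θ) :
    u₀ = 0 ∧ v₀ = 0 := by
  have hpyth := sin_sq_add_cos_sq θ
  rw [hu₁, hv₁] at hu₀ hv₀
  field_simp at hu₀ hv₀
  have hk : sin θ * (ω₁ + ω₂) ≠ 0 := by positivity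
  have hX : u₀ * sin θ * ω₁ - v₀ * cos θ = 0 := by
    refine (mul_eq_zero.1 ?_).resolve_right hk
    linear_combination hu₀ + u₀ * ω₁ * ω₂ * hpyth
  have hY : v₀ * sin θ + u₀ * cos θ * ω₁ = 0 := by
    refine (mul_eq_zero.1 ?_).resolve_right hk
    linear_combination hv₀ + v₀ * ω₁ * hpyth
  have hu : u₀ = 0 := by
    refine (mul_eq_zero.1 (?_ : u₀ * ω₁ = 0)).resolve_right hω₁.ne'
    linear_combination sin θ * hX + cos θ * hY - u₀ * ω₁ * hpyth
  refine ⟨hu, (mul_eq_zero.1 (?_ : v₀ * sin θ = 0)).resolve_right hθ.ne'⟩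
  linear_combination hY - cos θ * ω₁ * hu

theorem stmt16 (α x₀ : ℝ) (hα : α ∈ Set.Ioo 0 Real.pi)
    (hx₀ : x₀ ∈ Set.Ioo 0 Real.pi) :
    ∀ u v : ℝ → ℝ, IsSolOn (aPiece α x₀) u v 0 Real.pi →
      u 0 - u Real.pi = 0 → v 0 - v Real.pi = 0 →
      ∀ x ∈ Set.Icc 0 Real.pi, u x = 0 := by
  intro u v hsol hu hv
  obtain ⟨hα0, hαπ⟩ := hα
  obtain ⟨hx0, hxπ⟩ := hx₀
  have hint := (intervalIntegrable_aPiece α x₀ 0 π).mul_continuousOn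
    (uIcc_of_le pi_pos.le ▸ hsol.continuousOn)
  have hω₁ : 0 < α / x₀ := div_pos hα0 hx0
  have hω₂ : 0 < α / (π - x₀) := div_pos hα0 (sub_pos.2 hxπ)
  have left := (hsol.mono hint le_rfl hxπ.le).eq_harmonicSol hω₁.ne' fun t ht => by
    simp [aPiece, ht.2, div_pow]
  have right := (hsol.mono hint hx0.le le_rfl).eq_harmonicSol hω₂.ne' fun t ht => by
    simp [aPiece, not_lt.2 ht.1.le, div_pow]
  have hθ₁ : α / x₀ * (x₀ - 0) = α := by rw [sub_zero]; field_simp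
  have hθ₂ : α / (π - x₀) * (π - x₀) = α := by field_simp [(sub_pos.2 hxπ).ne']
  obtain ⟨hu₁, hv₁⟩ := left x₀ ⟨hx0.le, le_rfl⟩
  obtain ⟨hu₂, hv₂⟩ := right π ⟨hxπ.le, le_rfl⟩
  obtain ⟨hu0, hv0⟩ := eq_zero_of_transfer_cycle hω₁ hω₂ (sin_pos_of_pos_of_lt_pi hα0 hαπ)
    (hu₁.trans (harmonicSol_of_mul_eq hθ₁)) (hv₁.trans (harmonicSol_of_mul_eq hθ₁))
    ((sub_eq_zero.1 hu).trans (hu₂.trans (harmonicSol_of_mul_eq hθ₂)))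
    ((sub_eq_zero.1 hv).trans (hv₂.trans (harmonicSol_of_mul_eq hθ₂)))
  intro x hx
  rcases le_total x x₀ with h | h
  · simpa [hu0, hv0] using (left x ⟨hx.1, h⟩).1
  · simpa [hu₁, hv₁, hu0, hv0] using (right x ⟨h, hx.2⟩).1
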